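/- arXiv:2308.05089 — 3 statements merged into one kernel-verified Lean document; each statement's English description precedes it below -/
import Mathlib

section
/- For every n, the map φ : (ℝⁿ × ℝⁿ × ℝ) × ℝ × ℝ → ℝⁿ × ℝ × ℝⁿ × ℝ × ℝ defined by φ(x, ξ, t, s, w) = (x, s, s•ξ, −t, s·t + w) is infinitely differentiable, restricts to a bijection from the open set {(x, ξ, t, s, w) : s > 0} onto the open set {(x, s, y, σ, z) : s > 0} (with inverse (x, s, y, σ, z) ↦ (x, s⁻¹•y, −σ, s, z + s·σ)), and is a strict contactomorphism: for every point p = (x, ξ, t, s, w) and every tangent vector v = (vx, vξ, vt, vs, vw), the 1-form dz + σ ds + y·dx evaluated at φ(p) on the Fréchet derivative fderiv ℝ φ p applied to v equals the 1-form dw + s(dt + ξ·dx) evaluated at p on v, i.e. both sides equal vw + s·(vt + ⟪ξ, vx⟫). -/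
/-- The map `φ(x, ξ, t, s, w) = (x, s, s•ξ, −t, s·t + w)` is smooth,
restricts to a bijection from `{s > 0}` onto `{s > 0}` with the indicated inverse, and is a
strict contactomorphism: `(dz + σ ds + y·dx)|_{φ(p)} (Dφ_p v) = (dw + s(dt + ξ·dx))|_p (v)`. -/
theorem stmt_1 (n : ℕ)
    (φ : ((EuclideanSpace ℝ (Fin n)) × (EuclideanSpace ℝ (Fin n)) × ℝ) × ℝ × ℝ →
      (EuclideanSpace ℝ (Fin n)) × ℝ × (EuclideanSpace ℝ (Fin n)) × ℝ × ℝ)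
    (hφ : φ = fun p => (p.1.1, p.2.1, p.2.1 • p.1.2.1, -p.1.2.2, p.2.1 * p.1.2.2 + p.2.2)) :
    ContDiff ℝ (⊤ : ℕ∞) φ ∧
    Set.BijOn φ {p | 0 < p.2.1} {q | 0 < q.2.1} ∧
    Set.InvOn (fun q : (EuclideanSpace ℝ (Fin n)) × ℝ × (EuclideanSpace ℝ (Fin n)) × ℝ × ℝ =>
        ((q.1, q.2.1⁻¹ • q.2.2.1, -q.2.2.2.1), q.2.1, q.2.2.2.2 + q.2.1 * q.2.2.2.1))
      φ {p | 0 < p.2.1} {q | 0 < q.2.1} ∧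
    ∀ p v : ((EuclideanSpace ℝ (Fin n)) × (EuclideanSpace ℝ (Fin n)) × ℝ) × ℝ × ℝ,
      (fderiv ℝ φ p v).2.2.2.2 + (φ p).2.2.2.1 * (fderiv ℝ φ p v).2.1 +
          (inner ℝ ((φ p).2.2.1) ((fderiv ℝ φ p v).1) : ℝ) =
        v.2.2 + p.2.1 * (v.1.2.2 + (inner ℝ p.1.2.1 v.1.1 : ℝ)) := by
  subst hφ
  have hsmooth : ContDiff ℝ (⊤ : ℕ∞) (fun p : ((EuclideanSpace ℝ (Fin n)) × (EuclideanSpace ℝ (Fin n)) × ℝ) × ℝ × ℝ =>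
      ((p.1.1, p.2.1, p.2.1 • p.1.2.1, -p.1.2.2, p.2.1 * p.1.2.2 + p.2.2) :
        (EuclideanSpace ℝ (Fin n)) × ℝ × (EuclideanSpace ℝ (Fin n)) × ℝ × ℝ)) := by
    fun_prop
  have hinv : Set.InvOn (fun q : (EuclideanSpace ℝ (Fin n)) × ℝ × (EuclideanSpace ℝ (Fin n)) × ℝ × ℝ =>
        ((q.1, q.2.1⁻¹ • q.2.2.1, -q.2.2.2.1), q.2.1, q.2.2.2.2 + q.2.1 * q.2.2.2.1))
      (fun p => (p.1.1, p.2.1, p.2.1 • p.1.2.1, -p.1.2.2, p.2.1 * p.1.2.2 + p.2.2))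
      {p | 0 < p.2.1} {q | 0 < q.2.1} := by
    constructor
    · rintro ⟨⟨x, ξ, t⟩, s, w⟩ hs
      simp only [Set.mem_setOf_eq] at hs
      simp [smul_smul, inv_mul_cancel₀ hs.ne']
    · rintro ⟨x, s, y, σ, z⟩ hs
      simp only [Set.mem_setOf_eq] at hs
      simp [smul_smul, mul_inv_cancel₀ hs.ne']
  have hmt : Set.MapsTo (fun p : ((EuclideanSpace ℝ (Fin n)) × (EuclideanSpace ℝ (Fin n)) × ℝ) × ℝ × ℝ =>
      ((p.1.1, p.2.1, p.2.1 • p.1.2.1, -p.1.2.2, p.2.1 * p.1.2.2 + p.2.2) :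
        (EuclideanSpace ℝ (Fin n)) × ℝ × (EuclideanSpace ℝ (Fin n)) × ℝ × ℝ))
      {p | 0 < p.2.1} {q | 0 < q.2.1} := fun p hp => hp
  have hmt' : Set.MapsTo (fun q : (EuclideanSpace ℝ (Fin n)) × ℝ × (EuclideanSpace ℝ (Fin n)) × ℝ × ℝ =>
        ((q.1, q.2.1⁻¹ • q.2.2.1, -q.2.2.2.1), q.2.1, q.2.2.2.2 + q.2.1 * q.2.2.2.1))
      {q | 0 < q.2.1} {p | 0 < p.2.1} := fun q hq => hq
  refine ⟨hsmooth, hinv.bijOn hmt hmt', hinv, ?_⟩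
  rintro ⟨⟨x, ξ, t⟩, s, w⟩ ⟨⟨vx, vξ, vt⟩, vs, vw⟩
  have h1 : HasFDerivAt (fun p : ((EuclideanSpace ℝ (Fin n)) × (EuclideanSpace ℝ (Fin n)) × ℝ) × ℝ × ℝ => p.1.1)
      ((ContinuousLinearMap.fst ℝ (EuclideanSpace ℝ (Fin n)) ((EuclideanSpace ℝ (Fin n)) × ℝ)).comp (ContinuousLinearMap.fst ℝ ((EuclideanSpace ℝ (Fin n)) × (EuclideanSpace ℝ (Fin n)) × ℝ) (ℝ × ℝ))) (((x, ξ, t), s, w)) :=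
    ((ContinuousLinearMap.fst ℝ (EuclideanSpace ℝ (Fin n)) ((EuclideanSpace ℝ (Fin n)) × ℝ)).comp (ContinuousLinearMap.fst ℝ ((EuclideanSpace ℝ (Fin n)) × (EuclideanSpace ℝ (Fin n)) × ℝ) (ℝ × ℝ))).hasFDerivAt
  have hs : HasFDerivAt (fun p : ((EuclideanSpace ℝ (Fin n)) × (EuclideanSpace ℝ (Fin n)) × ℝ) × ℝ × ℝ => p.2.1)
      ((ContinuousLinearMap.fst ℝ ℝ ℝ).comp (ContinuousLinearMap.snd ℝ ((EuclideanSpace ℝ (Fin n)) × (EuclideanSpace ℝ (Fin n)) × ℝ) (ℝ × ℝ))) (((x, ξ, t), s, w)) :=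
    ((ContinuousLinearMap.fst ℝ ℝ ℝ).comp (ContinuousLinearMap.snd ℝ ((EuclideanSpace ℝ (Fin n)) × (EuclideanSpace ℝ (Fin n)) × ℝ) (ℝ × ℝ))).hasFDerivAt
  have hξ : HasFDerivAt (fun p : ((EuclideanSpace ℝ (Fin n)) × (EuclideanSpace ℝ (Fin n)) × ℝ) × ℝ × ℝ => p.1.2.1)
      (((ContinuousLinearMap.fst ℝ (EuclideanSpace ℝ (Fin n)) ℝ).comp (ContinuousLinearMap.snd ℝ (EuclideanSpace ℝ (Fin n)) ((EuclideanSpace ℝ (Fin n)) × ℝ))).comp (ContinuousLinearMap.fst ℝ ((EuclideanSpace ℝ (Fin n)) × (EuclideanSpace ℝ (Fin n)) × ℝ) (ℝ × ℝ))) (((x, ξ, t), s, w)) :=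
    (((ContinuousLinearMap.fst ℝ (EuclideanSpace ℝ (Fin n)) ℝ).comp (ContinuousLinearMap.snd ℝ (EuclideanSpace ℝ (Fin n)) ((EuclideanSpace ℝ (Fin n)) × ℝ))).comp (ContinuousLinearMap.fst ℝ ((EuclideanSpace ℝ (Fin n)) × (EuclideanSpace ℝ (Fin n)) × ℝ) (ℝ × ℝ))).hasFDerivAt
  have ht : HasFDerivAt (fun p : ((EuclideanSpace ℝ (Fin n)) × (EuclideanSpace ℝ (Fin n)) × ℝ) × ℝ × ℝ => p.1.2.2)
      (((ContinuousLinearMap.snd ℝ (EuclideanSpace ℝ (Fin n)) ℝ).comp (ContinuousLinearMap.snd ℝ (EuclideanSpace ℝ (Fin n)) ((EuclideanSpace ℝ (Fin n)) × ℝ))).comp (ContinuousLinearMap.fst ℝ ((EuclideanSpace ℝ (Fin n)) × (EuclideanSpace ℝ (Fin n)) × ℝ) (ℝ × ℝ))) (((x, ξ, t), s, w)) :=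
    (((ContinuousLinearMap.snd ℝ (EuclideanSpace ℝ (Fin n)) ℝ).comp (ContinuousLinearMap.snd ℝ (EuclideanSpace ℝ (Fin n)) ((EuclideanSpace ℝ (Fin n)) × ℝ))).comp (ContinuousLinearMap.fst ℝ ((EuclideanSpace ℝ (Fin n)) × (EuclideanSpace ℝ (Fin n)) × ℝ) (ℝ × ℝ))).hasFDerivAt
  have hw : HasFDerivAt (fun p : ((EuclideanSpace ℝ (Fin n)) × (EuclideanSpace ℝ (Fin n)) × ℝ) × ℝ × ℝ => p.2.2)
      ((ContinuousLinearMap.snd ℝ ℝ ℝ).comp (ContinuousLinearMap.snd ℝ ((EuclideanSpace ℝ (Fin n)) × (EuclideanSpace ℝ (Fin n)) × ℝ) (ℝ × ℝ))) (((x, ξ, t), s, w)) :=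
    ((ContinuousLinearMap.snd ℝ ℝ ℝ).comp (ContinuousLinearMap.snd ℝ ((EuclideanSpace ℝ (Fin n)) × (EuclideanSpace ℝ (Fin n)) × ℝ) (ℝ × ℝ))).hasFDerivAt
  have H := h1.prodMk (hs.prodMk ((hs.smul hξ).prodMk ((ht.neg).prodMk ((hs.mul ht).add hw))))
  rw [HasFDerivAt.fderiv (f := fun p : ((EuclideanSpace ℝ (Fin n)) × (EuclideanSpace ℝ (Fin n)) × ℝ) × ℝ × ℝ =>
        ((p.1.1, p.2.1, p.2.1 • p.1.2.1, -p.1.2.2, p.2.1 * p.1.2.2 + p.2.2) :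
          (EuclideanSpace ℝ (Fin n)) × ℝ × (EuclideanSpace ℝ (Fin n)) × ℝ × ℝ)) H]
  simp [real_inner_smul_left]
  simp only [mul_add, Finset.mul_sum, mul_assoc]
  ring
end

section
/- In Euclidean space ℝ³, let Λ₊ = {(s, exp s, exp s) : s ∈ ℝ} and Λ₋ = {(s, −exp s, −exp s) : s ∈ ℝ}. Then Λ₊ and Λ₋ are disjoint, yet the infimum of distances between them is zero: for every ε > 0 there exist p ∈ Λ₊ and q ∈ Λ₋ with dist(p, q) < ε. Consequently, for no r > 0 is the r-neighbourhood of one branch disjoint from the other branch, so the union L̃ = Λ₊ ∪ Λ₋ admits no tubular neighbourhood of positive radius with respect to the Euclidean metric. -/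
/-!
The points of `Λ₊` and `Λ₋` over the same parameter `s` differ only in the last two
coordinates, by `2eˢ` in each, so they are `2√2 eˢ` apart, which tends to `0` as `s → -∞`.
The branches never meet because their middle coordinates have opposite signs.
-/

open Real Filter Topology Set

theorem Metric.not_disjoint_thickening_of_forall_exists_dist_lt {α : Type*}
    [PseudoMetricSpace α] {A B : Set α} (h : ∀ ε > 0, ∃ p ∈ A, ∃ q ∈ B, dist p q < ε)
    {r : ℝ} (hr : 0 < r) : ¬ Disjoint (Metric.thickening r A) B := by
  obtain ⟨p, hp, q, hq, hpq⟩ := h r hr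
  exact Set.not_disjoint_iff.2
    ⟨q, Metric.mem_thickening_iff.2 ⟨p, hp, by rwa [dist_comm]⟩, hq⟩

theorem exists_dist_lt_of_tendsto_dist_zero {ι α : Type*} [PseudoMetricSpace α]
    {l : Filter ι} [l.NeBot] {f g : ι → α} (h : Tendsto (fun i => dist (f i) (g i)) l (𝓝 0))
    {ε : ℝ} (hε : 0 < ε) : ∃ p ∈ range f, ∃ q ∈ range g, dist p q < ε :=
  let ⟨i, hi⟩ := (h.eventually (gt_mem_nhds hε)).exists
  ⟨f i, mem_range_self i, g i, mem_range_self i, hi⟩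

theorem EuclideanSpace.dist_vec3_same_fst_repeated (x u v : ℝ) :
    dist ((WithLp.equiv 2 (Fin 3 → ℝ)).symm ![x, u, u])
      ((WithLp.equiv 2 (Fin 3 → ℝ)).symm ![x, v, v]) = √2 * |u - v| := by
  rw [EuclideanSpace.dist_eq, ← Real.sqrt_sq_eq_abs, ← Real.sqrt_mul zero_le_two]
  congr 1
  simp [Fin.sum_univ_three, Real.dist_eq]
  ring

/-- In Euclidean `ℝ³`, the two branches `Λ₊ = {(s, eˢ, eˢ)}` and
`Λ₋ = {(s, −eˢ, −eˢ)}` of the lift of the trivial conical cobordism are disjoint, the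
infimum of distances between them is `0`, and for no `r > 0` is the `r`-neighbourhood of
one branch disjoint from the other: the union admits no tubular neighbourhood of positive
radius for the Euclidean metric. -/
theorem stmt_2
    (Λp Λm : Set (EuclideanSpace ℝ (Fin 3)))
    (hp : Λp = Set.range fun s : ℝ =>
      (WithLp.equiv 2 (Fin 3 → ℝ)).symm ![s, Real.exp s, Real.exp s])
    (hm : Λm = Set.range fun s : ℝ =>
      (WithLp.equiv 2 (Fin 3 → ℝ)).symm ![s, -Real.exp s, -Real.exp s]) :
    Disjoint Λp Λm ∧
    (∀ ε > 0, ∃ p ∈ Λp, ∃ q ∈ Λm, dist p q < ε) ∧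
    ∀ r > 0, ¬ Disjoint (Metric.thickening r Λp) Λm := by
  have hclose : ∀ ε > 0, ∃ p ∈ Λp, ∃ q ∈ Λm, dist p q < ε := by
    intro ε hε
    rw [hp, hm]
    refine exists_dist_lt_of_tendsto_dist_zero (l := atBot) ?_ hε
    have hgap := (tendsto_exp_atBot.sub tendsto_exp_atBot.neg).abs.const_mul √2
    rw [neg_zero, sub_zero, abs_zero, mul_zero] at hgap
    simpa only [EuclideanSpace.dist_vec3_same_fst_repeated] using hgap
  refine ⟨?_, hclose, fun r hr => Metric.not_disjoint_thickening_of_forall_exists_dist_lt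
    hclose hr⟩
  rw [hp, hm, Set.disjoint_left]
  rintro _ ⟨s, rfl⟩ ⟨t, hts⟩
  have hmiddle := congrArg (· 1) hts
  simp only [WithLp.equiv_symm_apply, PiLp.toLp_apply, Matrix.cons_val_one,
    Matrix.cons_val_zero] at hmiddle
  linarith [exp_pos s, exp_pos t]
end

section
/- Let E be a finite-dimensional real inner product space, S ⊆ E a nonempty subset, and ε > 0. Then there exists an infinitely differentiable function H : E → ℝ with 0 ≤ H ≤ 1 such that H(x) = 0 whenever infDist(x, S) ≤ ε/2, H(x) = 1 whenever infDist(x, S) ≥ ε, and ‖fderiv ℝ H x‖ ≤ 3/ε for every x ∈ E. (This is the cut-off function with uniformly bounded differential used in the proof of Proposition 3.19 to construct a bounded Hamiltonian vector field separating the double copies of a Legendrian.) -/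
open Metric MeasureTheory ContinuousLinearMap Set
open scoped NNReal Convolution

/-- cut-off function of Proposition 3.19. For a nonempty subset `S` of a
finite-dimensional real inner product space and `ε > 0`, there is a smooth `H : E → ℝ`
with `0 ≤ H ≤ 1`, `H = 0` on the `ε/2`-neighbourhood of `S`, `H = 1` where
`infDist(·, S) ≥ ε`, and `‖dH‖ ≤ 3/ε` everywhere. -/
theorem stmt_5 {E : Type*} [NormedAddCommGroup E] [InnerProductSpace ℝ E]
    [FiniteDimensional ℝ E] (S : Set E) (hS : S.Nonempty) (ε : ℝ) (hε : 0 < ε) :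
    ∃ H : E → ℝ, ContDiff ℝ (⊤ : ℕ∞) H ∧ (∀ x, 0 ≤ H x ∧ H x ≤ 1) ∧
      (∀ x, Metric.infDist x S ≤ ε / 2 → H x = 0) ∧
      (∀ x, ε ≤ Metric.infDist x S → H x = 1) ∧
      ∀ x, ‖fderiv ℝ H x‖ ≤ 3 / ε := by
  borelize E
  set δ : ℝ := ε / 12 with hδ
  have hδpos : 0 < δ := by positivity
  set c : ℝ := ε / 2 + δ with hc
  set K : ℝ≥0 := ⟨3 / ε, by positivity⟩ with hK
  set g : E → ℝ := fun x => max 0 (min 1 ((Metric.infDist x S - c) * (3 / ε))) with hg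
  -- values of g
  have hg0 : ∀ z : E, Metric.infDist z S ≤ c → g z = 0 := by
    intro z hz
    have h1 : (Metric.infDist z S - c) * (3 / ε) ≤ 0 := by
      apply mul_nonpos_of_nonpos_of_nonneg <;> [linarith; positivity]
    exact max_eq_left ((min_le_right _ _).trans h1)
  have hg1 : ∀ z : E, 11 * ε / 12 ≤ Metric.infDist z S → g z = 1 := by
    intro z hz
    have h1 : 1 ≤ (Metric.infDist z S - c) * (3 / ε) := by
      have heq : (Metric.infDist z S - c) * (3 / ε) = 3 * (Metric.infDist z S - c) / ε := by
        ring
      rw [heq, le_div_iff₀ hε, one_mul]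
      simp only [hc, hδ]; linarith
    simp [hg, min_eq_left h1]
  have hgnonneg : ∀ z, 0 ≤ g z := fun z => le_max_left _ _
  have hgle : ∀ z, g z ≤ 1 := fun z => max_le one_pos.le (min_le_left _ _)
  -- g is Lipschitz
  have hglip : LipschitzWith K g := by
    have l1 : LipschitzWith K (fun t : ℝ => (t - c) * (3 / ε)) := by
      apply LipschitzWith.of_dist_le_mul
      intro x y
      rw [Real.dist_eq, Real.dist_eq]
      have : (x - c) * (3 / ε) - (y - c) * (3 / ε) = (x - y) * (3 / ε) := by ring
      rw [this, abs_mul, abs_of_nonneg (by positivity : (0:ℝ) ≤ 3 / ε)]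
      have : (K : ℝ) = 3 / ε := rfl
      rw [this]; ring_nf; rfl
    have l2 : LipschitzWith K (fun t : ℝ => max 0 (min 1 ((t - c) * (3 / ε)))) :=
      (l1.const_min 1).const_max 0
    have := l2.comp (Metric.lipschitz_infDist_pt S)
    rw [mul_one] at this; exact this
  have hgcont : Continuous g := hglip.continuous
  -- the bump function
  set φ : ContDiffBump (0 : E) := ⟨δ / 2, δ, by positivity, by linarith⟩ with hφ
  set H : E → ℝ := φ.normed volume ⋆[lsmul ℝ ℝ, volume] g with hH
  -- integrability
  have hint : ∀ x : E, Integrable (fun t => φ.normed volume t • g (x - t)) volume := by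
    intro x
    have : (fun t => φ.normed volume t • g (x - t)) =
        (fun t => g (x - t)) * (fun t => φ.normed volume t) := by
      ext t; simp [mul_comm]
    rw [this]
    exact (φ.integrable_normed).bdd_mul
      ((hgcont.comp (continuous_const.sub continuous_id)).aestronglyMeasurable)
      (Filter.Eventually.of_forall fun t => by rw [Real.norm_of_nonneg (hgnonneg _)]; exact hgle _)
  -- H is Lipschitz
  have hHlip : LipschitzWith K H := by
    apply LipschitzWith.of_dist_le_mul
    intro x y
    have hxy : H x - H y = ∫ t, φ.normed volume t • (g (x - t) - g (y - t)) := by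
      rw [hH]
      simp only [convolution_def, lsmul_apply]
      rw [← integral_sub (hint x) (hint y)]
      congr 1; ext t; rw [smul_sub]
    rw [dist_eq_norm, hxy]
    have hdom : ∀ t : E, ‖φ.normed volume t • (g (x - t) - g (y - t))‖ ≤
        φ.normed volume t * ((K : ℝ) * dist x y) := by
      intro t
      rw [norm_smul, Real.norm_of_nonneg (φ.nonneg_normed t)]
      apply mul_le_mul_of_nonneg_left _ (φ.nonneg_normed t)
      have := hglip.dist_le_mul (x - t) (y - t)
      rw [dist_eq_norm] at this ⊢
      simpa [dist_eq_norm, sub_sub_sub_cancel_right] using this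
    calc ‖∫ t, φ.normed volume t • (g (x - t) - g (y - t))‖
        ≤ ∫ t, φ.normed volume t * ((K : ℝ) * dist x y) := by
          apply norm_integral_le_of_norm_le (φ.integrable_normed.mul_const _)
          exact Filter.Eventually.of_forall hdom
      _ = (K : ℝ) * dist x y := by
          rw [integral_mul_const, φ.integral_normed, one_mul]
  refine ⟨H, ?_, ?_, ?_, ?_, ?_⟩
  · exact φ.hasCompactSupport_normed.contDiff_convolution_left _ φ.contDiff_normed
      (hgcont.locallyIntegrable)
  · intro x
    have := dist_convolution_le (f := φ.normed volume) (x₀ := x) (z₀ := (1/2 : ℝ))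
      (by norm_num : (0:ℝ) ≤ 1/2) φ.support_normed_eq.subset φ.nonneg_normed
      φ.integral_normed hgcont.aestronglyMeasurable
      (fun y _ => by
        rw [Real.dist_eq, abs_le]
        constructor <;> linarith [hgle y, hgnonneg y])
    rw [Real.dist_eq, abs_le] at this
    constructor <;> linarith [this.1, this.2]
  · intro x hx
    have hxc : Metric.infDist x S ≤ c := by rw [hc]; linarith
    have : H x = g x := φ.normed_convolution_eq_right (fun y hy => by
      have h1 := Metric.infDist_le_infDist_add_dist (x := y) (y := x) (s := S)
      have hyx : dist y x < δ := by rwa [Metric.mem_ball] at hy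
      rw [hg0 y (by rw [hc]; rw [hc] at hxc; linarith), hg0 x hxc])
    rw [this, hg0 x hxc]
  · intro x hx
    have hx1 : 11 * ε / 12 ≤ Metric.infDist x S := by linarith
    have : H x = g x := φ.normed_convolution_eq_right (fun y hy => by
      have h1 := Metric.infDist_le_infDist_add_dist (x := x) (y := y) (s := S)
      have hyx : dist x y < δ := by rw [Metric.mem_ball] at hy; rwa [dist_comm]
      rw [hg1 y (by rw [hδ] at hyx; linarith), hg1 x hx1])
    rw [this, hg1 x hx1]
  · intro x
    have := norm_fderiv_le_of_lipschitz ℝ hHlip (x₀ := x)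
    exact this
end
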